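/- Let G be a graph on n vertices with independence number α(G) ≤ 2, and let x, y be vertices of G. If xy is not an edge of G, the vertex y is adjacent to every vertex of N(x), and oh(G \ {x, y}) ≥ ⌈n/2⌉ − 1, then oh(G) ≥ ⌈n/2⌉. -/

import Mathlib

open SimpleGraph

/-- The spanning subgraph of `G` consisting of the edges that are bichromatic
(i.e. whose two endpoints receive different colors) under the 2-coloring `c`. -/
def SimpleGraph.bichromaticSubgraph {V : Type*} (G : SimpleGraph V) (c : V → Bool) :
    SimpleGraph V where
  Adj u v := G.Adj u v ∧ c u ≠ c v
  symm := ⟨fun u v h => ⟨h.1.symm, h.2.symm⟩⟩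
  loopless := ⟨fun v h => h.2 rfl⟩

/-- `G` contains an odd `K t` minor: there are `t` pairwise disjoint nonempty branch sets
and a 2-coloring of the vertices such that each branch set induces a connected subgraph
using only bichromatic edges (so it carries a spanning tree all of whose edges are
bichromatic), and every two branch sets are joined by a monochromatic edge of `G`. -/
def SimpleGraph.HasOddKMinor {V : Type*} (G : SimpleGraph V) (t : ℕ) : Prop :=
  ∃ (c : V → Bool) (B : Fin t → Set V),
    (∀ i, (B i).Nonempty) ∧
    (Pairwise fun i j => Disjoint (B i) (B j)) ∧
    (∀ i, ((G.bichromaticSubgraph c).induce (B i)).Connected) ∧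
    (∀ i j, i ≠ j → ∃ u ∈ B i, ∃ v ∈ B j, G.Adj u v ∧ c u = c v)

/-- `oh G` is the largest `t` such that `G` contains an odd `K t` minor. -/
noncomputable def SimpleGraph.oh {V : Type*} (G : SimpleGraph V) : ℕ :=
  sSup {t | G.HasOddKMinor t}

/-- The independence number of `G`. -/
noncomputable def SimpleGraph.indepNum' {V : Type*} (G : SimpleGraph V) : ℕ :=
  Gᶜ.cliqueNum

/-- The join of two vertex-disjoint graphs: take the disjoint union and add all
edges between the two parts. -/
def SimpleGraph.joinG {α β : Type*} (G : SimpleGraph α) (H : SimpleGraph β) :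
    SimpleGraph (α ⊕ β) where
  Adj u v := match u, v with
    | Sum.inl a, Sum.inl b => G.Adj a b
    | Sum.inr a, Sum.inr b => H.Adj a b
    | _, _ => True
  symm := ⟨by rintro (a | a) (b | b) h <;> first | exact h.symm | trivial⟩
  loopless := ⟨by rintro (a | a) h <;> exact h.ne rfl⟩

/-! Since α(G) ≤ 2 and N(x) ⊆ N(y), every vertex other than x and y is adjacent to x or to y,
hence to y. Take an odd minor of G \ {x, y} of maximum order. A branch set using a single
colour forces that colour onto every other branch set through the monochromatic edges joining
them, so some colour b meets every branch set; then {y}, coloured b, is one more branch set. -/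

namespace SimpleGraph

variable {V : Type*} {G : SimpleGraph V} {t : ℕ}

lemma hasOddKMinor_zero (G : SimpleGraph V) : G.HasOddKMinor 0 :=
  ⟨fun _ => true, Fin.elim0, fun i => i.elim0, fun i => i.elim0, fun i => i.elim0,
    fun i => i.elim0⟩

lemma bddAbove_setOf_hasOddKMinor [Finite V] (G : SimpleGraph V) :
    BddAbove {t | G.HasOddKMinor t} := by
  refine ⟨Nat.card V, fun t ⟨_, B, hBne, hBdisj, _⟩ => ?_⟩
  choose f hf using hBne
  have hf_inj : Function.Injective f := fun i j hij => by
    by_contra h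
    exact Set.disjoint_left.mp (hBdisj h) (hf i) (hij ▸ hf j)
  simpa using Nat.card_le_card_of_injective f hf_inj

lemma HasOddKMinor.le_oh [Finite V] (h : G.HasOddKMinor t) : t ≤ G.oh :=
  le_csSup (bddAbove_setOf_hasOddKMinor G) h

lemma hasOddKMinor_oh [Finite V] (G : SimpleGraph V) : G.HasOddKMinor G.oh :=
  Nat.sSup_mem ⟨0, hasOddKMinor_zero G⟩ (bddAbove_setOf_hasOddKMinor G)

lemma adj_or_adj_of_indepNum'_le_two [Finite V] (hα : G.indepNum' ≤ 2) {x y z : V}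
    (hxy : x ≠ y) (hnxy : ¬G.Adj x y) (hzx : z ≠ x) (hzy : z ≠ y) :
    G.Adj x z ∨ G.Adj y z := by
  classical
  by_contra! h
  have h3 : Gᶜ.IsNClique 3 {x, y, z} :=
    is3Clique_triple_iff.mpr ⟨⟨hxy, hnxy⟩, ⟨hzx.symm, h.1⟩, ⟨hzy.symm, h.2⟩⟩
  have := h3.card_eq ▸ h3.isClique.card_le_cliqueNum
  exact absurd (this.trans hα) (by norm_num)

lemma exists_color_forall_exists_mem {c : V → Bool} {B : Fin t → Set V} (hBne : ∀ i, (B i).Nonempty)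
    (hjoin : ∀ i j, i ≠ j → ∃ u ∈ B i, ∃ v ∈ B j, G.Adj u v ∧ c u = c v) :
    ∃ b, ∀ i, ∃ u ∈ B i, c u = b := by
  by_contra! h
  obtain ⟨i, hi⟩ := h true
  obtain ⟨j, hj⟩ := h false
  by_cases hij : i = j
  · obtain ⟨u, hu⟩ := hBne i
    cases hcu : c u
    · exact hj u (hij ▸ hu) hcu
    · exact hi u hu hcu
  · obtain ⟨u, hu, v, hv, -, huv⟩ := hjoin i j hij
    cases hcu : c u
    · exact hj v hv (huv ▸ hcu)
    · exact hi u hu hcu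

lemma connected_bichromaticSubgraph_induce_image {S : Set V} {c : V → Bool} {A : Set S}
    (h : (((G.induce S).bichromaticSubgraph (c ∘ (↑))).induce A).Connected) :
    ((G.bichromaticSubgraph c).induce (Subtype.val '' A)).Connected :=
  (Iso.connected_iff ⟨Equiv.Set.image Subtype.val A Subtype.val_injective, Iff.rfl⟩).mp h

lemma HasOddKMinor.succ_of_forall_adj {S : Set V} {v : V} (hv : v ∉ S)
    (hadj : ∀ w ∈ S, G.Adj v w) (h : (G.induce S).HasOddKMinor t) :
    G.HasOddKMinor (t + 1) := by
  classical
  obtain ⟨c', B', hBne, hBdisj, hBconn, hBjoin⟩ := h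
  obtain ⟨b, hb⟩ := exists_color_forall_exists_mem hBne hBjoin
  let c : V → Bool := fun w => if hw : w ∈ S then c' ⟨w, hw⟩ else b
  have hc : c ∘ (↑) = c' := funext fun w => dif_pos w.2
  let B : Fin (t + 1) → Set V := Fin.snoc (fun i => Subtype.val '' B' i) {v}
  have hB_cast (i : Fin t) : B i.castSucc = Subtype.val '' B' i := Fin.snoc_castSucc ..
  have hB_last : B (Fin.last t) = {v} := Fin.snoc_last ..
  have hdisj_last (i : Fin t) : Disjoint (B i.castSucc) (B (Fin.last t)) := by
    rw [hB_cast, hB_last, Set.disjoint_singleton_right]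
    exact fun ⟨w, _, hw⟩ => hv (hw ▸ w.2)
  have hjoin_last (i : Fin t) :
      ∃ u ∈ B i.castSucc, ∃ w ∈ B (Fin.last t), G.Adj u w ∧ c u = c w := by
    obtain ⟨u, hu, hcu⟩ := hb i
    refine ⟨u, hB_cast i ▸ ⟨u, hu, rfl⟩, v, hB_last ▸ rfl, (hadj u u.2).symm, ?_⟩
    rw [← hc] at hcu
    exact hcu.trans (dif_neg hv : c v = b).symm
  refine ⟨c, B, fun i => ?_, fun i j hij => ?_, fun i => ?_, fun i j hij => ?_⟩
  · induction i using Fin.lastCases with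
    | last => exact hB_last ▸ Set.singleton_nonempty v
    | cast i => exact hB_cast i ▸ (hBne i).image _
  · induction i using Fin.lastCases <;> induction j using Fin.lastCases
    · exact absurd rfl hij
    · exact (hdisj_last _).symm
    · exact hdisj_last _
    · rw [hB_cast, hB_cast, Set.disjoint_image_iff Subtype.val_injective]
      exact hBdisj fun h => hij (congrArg _ h)
  · induction i using Fin.lastCases with
    | last => exact hB_last ▸ (induce_singleton_eq_top _ v) ▸ connected_top
    | cast i => exact hB_cast i ▸ connected_bichromaticSubgraph_induce_image (hc ▸ hBconn i)
  · induction i using Fin.lastCases <;> induction j using Fin.lastCases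
    · exact absurd rfl hij
    · obtain ⟨u, hu, w, hw, huw, hcuw⟩ := hjoin_last ‹_›
      exact ⟨w, hw, u, hu, huw.symm, hcuw.symm⟩
    · exact hjoin_last _
    · obtain ⟨u, hu, w, hw, huw, hcuw⟩ := hBjoin _ _ fun h => hij (congrArg _ h)
      refine ⟨u, hB_cast _ ▸ ⟨u, hu, rfl⟩, w, hB_cast _ ▸ ⟨w, hw, rfl⟩, huw, ?_⟩
      rwa [← hc] at hcuw

end SimpleGraph

theorem statement10 {V : Type*} [Fintype V] (G : SimpleGraph V)
    (hα : G.indepNum' ≤ 2) (x y : V) (hne : x ≠ y) (hxy : ¬ G.Adj x y)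
    (hy : ∀ z, G.Adj x z → G.Adj y z)
    (hoh : (Fintype.card V + 1) / 2 - 1 ≤ (G.induce ({x, y}ᶜ : Set V)).oh) :
    (Fintype.card V + 1) / 2 ≤ G.oh := by
  have hy_dom : ∀ z ∈ ({x, y}ᶜ : Set V), G.Adj y z := fun z hz => by
    simp only [Set.mem_compl_iff, Set.mem_insert_iff, Set.mem_singleton_iff, not_or] at hz
    exact (adj_or_adj_of_indepNum'_le_two hα hne hxy hz.1 hz.2).elim (hy z) id
  have := ((G.induce _).hasOddKMinor_oh.succ_of_forall_adj (by simp) hy_dom).le_oh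
  omega
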